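/- arXiv:1905.09613 — 2 statements merged into one kernel-verified Lean document; each statement's English description precedes it below -/
import Mathlib

section
/- The composition of the map 1 ⊗ τ ⊗ 1 : C ⊗ C ⊗ D ⊗ D → C ⊗ D ⊗ C ⊗ D (where τ(c ⊗ d) = (−1)^{ij} (ᵍd) ⊗ c for c ∈ (C_i)_g and d ∈ D_j) with the canonical surjection C ⊗ D ⊗ C ⊗ D → (C ⊗^G D) ⊗_{S⋊G} (C ⊗^G D) is kG-middle linear in the first two tensor arguments and S-middle linear in the last two tensor arguments; that is, it factors through (C ⊗_{kG} C) ⊗ (D ⊗_S D). -/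
/-!
Both identities are bilinear in the middle arguments `(c', d)`, and `C`, `D` are internal direct
sums of their homogeneous pieces, so it suffices to take `c' ∈ (C_i)_h` and `d ∈ D_j`. Then the
two sides of each identity are `(-1)^{ij}` times the classes in `X ⊗_A X` of `x a ⊗ y` and
`x ⊗ a y` for pure tensors `x, y ∈ X` and a single `a ∈ A`: `a = ιG g` for the `kG` relation
with `z = g` (moving `g` across turns the twist `h • d` into `(g h) • d`), and `a = ιS (h • s)`
for the `S` relation. The `kG` relation for general `z` follows by linearity, and the
factorization is then `LinearMap.liftQ₂`.
-/

open scoped TensorProduct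
open MulOpposite

noncomputable section

universe u

variable (k : Type u) [Field k]

/-- The submodule of middle-linearity relations defining the tensor product over `R`
of a right `R`-module `M` and a left `R`-module `N`. -/
def midRel (R : Type u) [Ring R] (M N : Type u)
    [AddCommGroup M] [Module k M] [Module Rᵐᵒᵖ M]
    [AddCommGroup N] [Module k N] [Module R N] : Submodule k (M ⊗[k] N) :=
  Submodule.span k
    {z | ∃ (r : R) (m : M) (n : N), z = (op r • m) ⊗ₜ[k] n - m ⊗ₜ[k] (r • n)}

/-- The tensor product `M ⊗_R N` over `R`, as a quotient of `M ⊗[k] N`. -/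
abbrev OverR (R : Type u) [Ring R] (M N : Type u)
    [AddCommGroup M] [Module k M] [Module Rᵐᵒᵖ M]
    [AddCommGroup N] [Module k N] [Module R N] : Type u :=
  (M ⊗[k] N) ⧸ midRel k R M N

/-- The image of a pure tensor in `M ⊗_R N`. -/
abbrev omk (R : Type u) [Ring R] {M N : Type u}
    [AddCommGroup M] [Module k M] [Module Rᵐᵒᵖ M]
    [AddCommGroup N] [Module k N] [Module R N] (m : M) (n : N) :
    OverR k R M N :=
  Submodule.Quotient.mk (m ⊗ₜ[k] n)

variable (G : Type u) [Group G] [Finite G] [DecidableEq G]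
variable (S : Type u) [Ring S] [Algebra k S] [MulSemiringAction G S] [SMulCommClass G k S]

section SkewSetup

variable (C : Type u) [AddCommGroup C] [Module k C]
  [Module (MonoidAlgebra k G) C] [Module (MonoidAlgebra k G)ᵐᵒᵖ C]
  [IsScalarTower k (MonoidAlgebra k G) C] [IsScalarTower k (MonoidAlgebra k G)ᵐᵒᵖ C]
  [SMulCommClass (MonoidAlgebra k G) (MonoidAlgebra k G)ᵐᵒᵖ C]
  [SMulCommClass (MonoidAlgebra k G) k C] [SMulCommClass (MonoidAlgebra k G)ᵐᵒᵖ k C]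

/-- A `G`-graded projective resolution `C` of `kG` by `kG`-bimodules (internally graded:
`gr i` is the homological piece `C_i`, and `grG g` is the `G`-homogeneous component of
`G`-degree `g`, with `g₁ (C_i)_{g₂} g₃ = (C_i)_{g₁ g₂ g₃}`), together with the sign
operator `ε_C : c ↦ (-1)^{|c|} c`. -/
structure ResKG : Type u where
  gr : ℕ → Submodule k C
  grG : G → Submodule k C
  internal : DirectSum.IsInternal fun p : ℕ × G => gr p.1 ⊓ grG p.2
  internalN : DirectSum.IsInternal gr
  gr_smul : ∀ (n : ℕ) (a : MonoidAlgebra k G) (x : C), x ∈ gr n → a • x ∈ gr n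
  gr_smul_op : ∀ (n : ℕ) (a : (MonoidAlgebra k G)ᵐᵒᵖ) (x : C), x ∈ gr n → a • x ∈ gr n
  grG_act : ∀ (g₁ g₂ g₃ : G) (x : C), x ∈ grG g₂ →
    (MonoidAlgebra.single g₁ (1 : k)) • (op (MonoidAlgebra.single g₃ (1 : k)) • x)
      ∈ grG (g₁ * g₂ * g₃)
  proj : letI : Module ((MonoidAlgebra k G) ⊗[k] (MonoidAlgebra k G)ᵐᵒᵖ) C :=
      TensorProduct.Algebra.module
    Module.Projective ((MonoidAlgebra k G) ⊗[k] (MonoidAlgebra k G)ᵐᵒᵖ) C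
  d : C →ₗ[k] C
  d_gr : ∀ (n : ℕ) (x : C), x ∈ gr (n + 1) → d x ∈ gr n
  d_grG : ∀ (g : G) (x : C), x ∈ grG g → d x ∈ grG g
  d_zero : ∀ x ∈ gr 0, d x = 0
  d_sq : d ∘ₗ d = 0
  d_smul : ∀ (a : MonoidAlgebra k G) (x : C), d (a • x) = a • d x
  d_smul_op : ∀ (a : (MonoidAlgebra k G)ᵐᵒᵖ) (x : C), d (a • x) = a • d x
  aug : C →ₗ[k] MonoidAlgebra k G
  aug_gr : ∀ (n : ℕ) (x : C), x ∈ gr (n + 1) → aug x = 0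
  aug_smul : ∀ (a : MonoidAlgebra k G) (x : C), aug (a • x) = a * aug x
  aug_smul_op : ∀ (a : (MonoidAlgebra k G)ᵐᵒᵖ) (x : C), aug (a • x) = aug x * a.unop
  aug_surj : Function.Surjective aug
  exact_zero : ∀ x ∈ gr 0, aug x = 0 → ∃ y ∈ gr 1, d y = x
  exact_succ : ∀ (n : ℕ), ∀ x ∈ gr (n + 1), d x = 0 → ∃ y ∈ gr (n + 2), d y = x
  eps : C →ₗ[k] C
  eps_apply : ∀ (n : ℕ) (x : C), x ∈ gr n → eps x = ((-1 : k) ^ n) • x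

variable (D : Type u) [AddCommGroup D] [Module k D]
  [Module S D] [Module Sᵐᵒᵖ D]
  [IsScalarTower k S D] [IsScalarTower k Sᵐᵒᵖ D]
  [SMulCommClass S Sᵐᵒᵖ D] [SMulCommClass S k D] [SMulCommClass Sᵐᵒᵖ k D]
  [DistribMulAction G D] [SMulCommClass G k D]

/-- A projective resolution `D` of `S` by `S`-bimodules (internally graded), equipped with
a compatible left action of `G`: `g • (s • x) = (g • s) • (g • x)` and the differentials
are `kG`-linear. -/
structure ResS : Type u where
  gr : ℕ → Submodule k D
  internal : DirectSum.IsInternal gr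
  gr_smul : ∀ (n : ℕ) (s : S) (x : D), x ∈ gr n → s • x ∈ gr n
  gr_smul_op : ∀ (n : ℕ) (s : Sᵐᵒᵖ) (x : D), x ∈ gr n → s • x ∈ gr n
  gr_gact : ∀ (n : ℕ) (g : G) (x : D), x ∈ gr n → g • x ∈ gr n
  proj : letI : Module (S ⊗[k] Sᵐᵒᵖ) D := TensorProduct.Algebra.module
    Module.Projective (S ⊗[k] Sᵐᵒᵖ) D
  act_compat : ∀ (g : G) (s : S) (x : D), g • (s • x) = (g • s) • (g • x)
  act_compat_op : ∀ (g : G) (s : S) (x : D), g • (op s • x) = op (g • s) • (g • x)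
  d : D →ₗ[k] D
  d_gr : ∀ (n : ℕ) (x : D), x ∈ gr (n + 1) → d x ∈ gr n
  d_zero : ∀ x ∈ gr 0, d x = 0
  d_sq : d ∘ₗ d = 0
  d_smul : ∀ (s : S) (x : D), d (s • x) = s • d x
  d_smul_op : ∀ (s : Sᵐᵒᵖ) (x : D), d (s • x) = s • d x
  d_gact : ∀ (g : G) (x : D), d (g • x) = g • d x
  aug : D →ₗ[k] S
  aug_gr : ∀ (n : ℕ) (x : D), x ∈ gr (n + 1) → aug x = 0
  aug_smul : ∀ (s : S) (x : D), aug (s • x) = s * aug x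
  aug_smul_op : ∀ (s : Sᵐᵒᵖ) (x : D), aug (s • x) = aug x * s.unop
  aug_surj : Function.Surjective aug
  exact_zero : ∀ x ∈ gr 0, aug x = 0 → ∃ y ∈ gr 1, d y = x
  exact_succ : ∀ (n : ℕ), ∀ x ∈ gr (n + 1), d x = 0 → ∃ y ∈ gr (n + 2), d y = x

variable (A : Type u) [Ring A] [Algebra k A]

/-- The `k`-linear map `S ⊗ kG → A` sending `s ⊗ g ↦ ιS(s) ιG(g)`; requiring it to be
bijective expresses that `A = S ⋊ G` is the skew group algebra of the action of `G`
on `S` (via the embeddings `ιS`, `ιG` and the commutation rule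
`ιG(g) ιS(s) = ιS(g • s) ιG(g)`). -/
def skewAssembly (ιS : S →ₐ[k] A) (ιG : G →* A) : (G →₀ S) →ₗ[k] A :=
  Finsupp.lsum k fun g => (LinearMap.mulRight k (ιG g)) ∘ₗ ιS.toLinearMap

/-- The homogeneous component of total homological degree `n` of `X = C ⊗ D`. -/
def Xdeg (grC : ℕ → Submodule k C) (grD : ℕ → Submodule k D) (n : ℕ) :
    Submodule k (C ⊗[k] D) :=
  ⨆ (p : ℕ × ℕ) (_ : p.1 + p.2 = n),
    Submodule.span k
      (Set.image2 (fun (c : C) (d : D) => c ⊗ₜ[k] d) (grC p.1 : Set C) (grD p.2 : Set D))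

end SkewSetup

variable {G S}

namespace LinearMap

variable {R M N P : Type*} [CommSemiring R] [AddCommMonoid M] [AddCommMonoid N] [AddCommMonoid P]
  [Module R M] [Module R N] [Module R P]

theorem ext_of_iSup_eq_top {ι : Sort*} {p : ι → Submodule R M} (hp : ⨆ i, p i = ⊤)
    {f g : M →ₗ[R] N} (h : ∀ i, ∀ x ∈ p i, f x = g x) : f = g :=
  ext_on (s := ⋃ i, (p i : Set M)) (by rw [← Submodule.iSup_eq_span, hp]) fun x hx => by
    obtain ⟨i, hi⟩ := Set.mem_iUnion.1 hx
    exact h i x hi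

theorem ext_of_iSup_eq_top₂ {ι κ : Sort*} {p : ι → Submodule R M} {q : κ → Submodule R N}
    (hp : ⨆ i, p i = ⊤) (hq : ⨆ j, q j = ⊤) {f g : M →ₗ[R] N →ₗ[R] P}
    (h : ∀ i j, ∀ x ∈ p i, ∀ y ∈ q j, f x y = g x y) : f = g :=
  ext_of_iSup_eq_top hp fun i x hx => ext_of_iSup_eq_top hq fun j y hy => h i j x hx y hy

end LinearMap

namespace TensorProduct

variable {R M N P Q V : Type*} [CommSemiring R] [AddCommMonoid M] [AddCommMonoid N]
  [AddCommMonoid P] [AddCommMonoid Q] [AddCommMonoid V] [Module R M] [Module R N] [Module R P]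
  [Module R Q] [Module R V]

def curryMiddle (Ψ : (M ⊗[R] N) ⊗[R] (P ⊗[R] Q) →ₗ[R] V) (m : M) (q : Q) :
    N →ₗ[R] P →ₗ[R] V :=
  ((mk R _ _).compl₁₂ (mk R M N m) ((mk R P Q).flip q)).compr₂ Ψ

@[simp]
theorem curryMiddle_apply (Ψ : (M ⊗[R] N) ⊗[R] (P ⊗[R] Q) →ₗ[R] V) (m : M) (q : Q) (n : N)
    (p : P) : curryMiddle Ψ m q n p = Ψ ((m ⊗ₜ n) ⊗ₜ (p ⊗ₜ q)) :=
  rfl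

end TensorProduct

section MiddleLinearity

open TensorProduct

variable {k} {R R' M N P Q : Type u} [Ring R] [Ring R']
  [AddCommGroup M] [Module k M] [Module Rᵐᵒᵖ M] [AddCommGroup N] [Module k N] [Module R N]
  [AddCommGroup P] [Module k P] [Module R'ᵐᵒᵖ P] [AddCommGroup Q] [Module k Q] [Module R' Q]

theorem omk_op_smul (r : R) (m : M) (n : N) : omk k R (op r • m) n = omk k R m (r • n) :=
  (Submodule.Quotient.eq _).2 (Submodule.subset_span ⟨r, m, n, rfl⟩)

theorem exists_eq_comp_map_midRel_mkQ {V : Type*} [AddCommGroup V] [Module k V]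
    (Ψ : (M ⊗[k] N) ⊗[k] (P ⊗[k] Q) →ₗ[k] V)
    (h₁ : ∀ (r : R) (m : M) (n : N) (p : P) (q : Q),
      Ψ (((op r • m) ⊗ₜ n) ⊗ₜ (p ⊗ₜ q)) = Ψ ((m ⊗ₜ (r • n)) ⊗ₜ (p ⊗ₜ q)))
    (h₂ : ∀ (r : R') (m : M) (n : N) (p : P) (q : Q),
      Ψ ((m ⊗ₜ n) ⊗ₜ ((op r • p) ⊗ₜ q)) = Ψ ((m ⊗ₜ n) ⊗ₜ (p ⊗ₜ (r • q)))) :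
    ∃ Θ : OverR k R M N ⊗[k] OverR k R' P Q →ₗ[k] V,
      Ψ = Θ ∘ₗ map (midRel k R M N).mkQ (midRel k R' P Q).mkQ := by
  have hker₁ : midRel k R M N ≤ LinearMap.ker (curry Ψ) := by
    refine Submodule.span_le.2 ?_
    rintro _ ⟨r, m, n, rfl⟩
    exact LinearMap.mem_ker.2 <| ext' fun p q => by simp [h₁]
  have hker₂ : midRel k R' P Q ≤ LinearMap.ker (curry Ψ).flip := by
    refine Submodule.span_le.2 ?_
    rintro _ ⟨r, p, q, rfl⟩
    exact LinearMap.mem_ker.2 <| ext' fun m n => by simp [h₂]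
  exact ⟨lift ((curry Ψ).liftQ₂ _ _ hker₁ hker₂), ext' fun _ _ => rfl⟩

end MiddleLinearity

namespace MonoidAlgebra

open TensorProduct

variable {k G M N V : Type*} [CommSemiring k] [Monoid G]
  [AddCommMonoid M] [Module k M] [Module (MonoidAlgebra k G)ᵐᵒᵖ M]
  [IsScalarTower k (MonoidAlgebra k G)ᵐᵒᵖ M]
  [AddCommMonoid N] [Module k N] [Module (MonoidAlgebra k G) N]
  [IsScalarTower k (MonoidAlgebra k G) N] [AddCommMonoid V] [Module k V]

theorem op_smul_tmul_eq_of_single (Φ : M ⊗[k] N →ₗ[k] V)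
    (h : ∀ (g : G) (m : M) (n : N),
      Φ ((op (single g (1 : k)) • m) ⊗ₜ n) = Φ (m ⊗ₜ (single g (1 : k) • n)))
    (z : MonoidAlgebra k G) (m : M) (n : N) : Φ ((op z • m) ⊗ₜ n) = Φ (m ⊗ₜ (z • n)) := by
  induction z using induction_linear with
  | zero => simp
  | add z w hz hw => simp only [op_add, add_smul, add_tmul, tmul_add, map_add, hz, hw]
  | single g b =>
    rw [← mul_one b, ← smul_single', op_smul, smul_assoc, smul_assoc, ← smul_tmul', tmul_smul,
      map_smul, map_smul, h]

end MonoidAlgebra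

section Twisting

open TensorProduct MonoidAlgebra

variable {k} {G : Type u} [Group G] [DecidableEq G]
  {S : Type u} [Ring S] [Algebra k S] [MulSemiringAction G S]
  {C : Type u} [AddCommGroup C] [Module k C]
  [Module (MonoidAlgebra k G) C] [Module (MonoidAlgebra k G)ᵐᵒᵖ C]
  [IsScalarTower k (MonoidAlgebra k G) C] [IsScalarTower k (MonoidAlgebra k G)ᵐᵒᵖ C]
  [SMulCommClass (MonoidAlgebra k G) (MonoidAlgebra k G)ᵐᵒᵖ C]
  {D : Type u} [AddCommGroup D] [Module k D] [Module S D] [Module Sᵐᵒᵖ D]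
  [IsScalarTower k S D] [IsScalarTower k Sᵐᵒᵖ D] [SMulCommClass S Sᵐᵒᵖ D] [DistribMulAction G D]
  {RC : ResKG k G C} {RD : ResS k G S D}
  {A : Type u} [Ring A] [Algebra k A] {ιS : S →ₐ[k] A} {ιG : G →* A}
  [Module A (C ⊗[k] D)] [Module Aᵐᵒᵖ (C ⊗[k] D)]
  {Ψ : (C ⊗[k] C) ⊗[k] (D ⊗[k] D) →ₗ[k] OverR k A (C ⊗[k] D) (C ⊗[k] D)}

theorem curryMiddle_op_single_smul
    (hactL : ∀ (s' : S) (g' h : G) (c : C) (d : D), c ∈ RC.grG h →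
      (ιS s' * ιG g') • (c ⊗ₜ[k] d) =
        ((single g' (1 : k)) • c) ⊗ₜ[k] ((((g' * h)⁻¹ : G) • s') • d))
    (hactR : ∀ (s : S) (g : G) (c : C) (d : D),
      (op (ιS s * ιG g)) • (c ⊗ₜ[k] d) =
        (op (single g (1 : k)) • c) ⊗ₜ[k] ((g⁻¹ : G) • (op s • d)))
    (hΨ : ∀ (i j : ℕ) (g : G) (c c' : C) (d d' : D),
      c' ∈ RC.gr i → c' ∈ RC.grG g → d ∈ RD.gr j →
      Ψ ((c ⊗ₜ[k] c') ⊗ₜ[k] (d ⊗ₜ[k] d')) =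
        (-1 : k) ^ (i * j) • omk k A (c ⊗ₜ[k] (g • d)) (c' ⊗ₜ[k] d'))
    (g : G) (c : C) (d' : D) :
    curryMiddle Ψ (op (single g (1 : k)) • c) d' =
      curryMiddle Ψ c d' ∘ₗ DistribSMul.toLinearMap k C (single g (1 : k)) := by
  refine LinearMap.ext_of_iSup_eq_top₂ RC.internal.submodule_iSup_eq_top
    RD.internal.submodule_iSup_eq_top ?_
  rintro ⟨i, h⟩ j c' ⟨hc'i, hc'h⟩ d hd
  have hgc' : single g (1 : k) • c' ∈ RC.grG (g * h) := by
    simpa [← one_def] using RC.grG_act g h 1 c' hc'h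
  have hL : ιG g • (c' ⊗ₜ[k] d') = (single g (1 : k) • c') ⊗ₜ[k] d' := by
    simpa using hactL 1 g h c' d' hc'h
  have hR : op (ιG g) • (c ⊗ₜ[k] ((g * h) • d)) = (op (single g (1 : k)) • c) ⊗ₜ[k] (h • d) := by
    simpa [smul_smul] using hactR 1 g c ((g * h) • d)
  simp only [curryMiddle_apply, LinearMap.comp_apply, DistribSMul.toLinearMap_apply,
    hΨ i j h _ _ _ _ hc'i hc'h hd, hΨ i j (g * h) _ _ _ _ (RC.gr_smul i _ _ hc'i) hgc' hd,
    ← hL, ← hR, omk_op_smul]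

theorem curryMiddle_compl₂_op_smul
    (hactL : ∀ (s' : S) (g' h : G) (c : C) (d : D), c ∈ RC.grG h →
      (ιS s' * ιG g') • (c ⊗ₜ[k] d) =
        ((single g' (1 : k)) • c) ⊗ₜ[k] ((((g' * h)⁻¹ : G) • s') • d))
    (hactR : ∀ (s : S) (g : G) (c : C) (d : D),
      (op (ιS s * ιG g)) • (c ⊗ₜ[k] d) =
        (op (single g (1 : k)) • c) ⊗ₜ[k] ((g⁻¹ : G) • (op s • d)))
    (hΨ : ∀ (i j : ℕ) (g : G) (c c' : C) (d d' : D),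
      c' ∈ RC.gr i → c' ∈ RC.grG g → d ∈ RD.gr j →
      Ψ ((c ⊗ₜ[k] c') ⊗ₜ[k] (d ⊗ₜ[k] d')) =
        (-1 : k) ^ (i * j) • omk k A (c ⊗ₜ[k] (g • d)) (c' ⊗ₜ[k] d'))
    (s : S) (c : C) (d' : D) :
    (curryMiddle Ψ c d').compl₂ (DistribSMul.toLinearMap k D (op s)) =
      curryMiddle Ψ c (s • d') := by
  refine LinearMap.ext_of_iSup_eq_top₂ RC.internal.submodule_iSup_eq_top
    RD.internal.submodule_iSup_eq_top ?_
  rintro ⟨i, h⟩ j c' ⟨hc'i, hc'h⟩ d hd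
  have hL : ιS (h • s) • (c' ⊗ₜ[k] d') = c' ⊗ₜ[k] (s • d') := by
    simpa [← one_def] using hactL (h • s) 1 h c' d' hc'h
  have hR : op (ιS (h • s)) • (c ⊗ₜ[k] (h • d)) = c ⊗ₜ[k] (h • (op s • d)) := by
    simpa [← one_def, RD.act_compat_op] using hactR (h • s) 1 c (h • d)
  simp only [curryMiddle_apply, LinearMap.compl₂_apply, DistribSMul.toLinearMap_apply,
    hΨ i j h _ _ _ _ hc'i hc'h hd, hΨ i j h _ _ _ _ hc'i hc'h (RD.gr_smul_op j _ _ hd),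
    ← hL, ← hR, omk_op_smul]

end Twisting

theorem twisting_map_middle_linear
    (C : Type u) [AddCommGroup C] [Module k C]
    [Module (MonoidAlgebra k G) C] [Module (MonoidAlgebra k G)ᵐᵒᵖ C]
    [IsScalarTower k (MonoidAlgebra k G) C] [IsScalarTower k (MonoidAlgebra k G)ᵐᵒᵖ C]
    [SMulCommClass (MonoidAlgebra k G) (MonoidAlgebra k G)ᵐᵒᵖ C]
    (D : Type u) [AddCommGroup D] [Module k D]
    [Module S D] [Module Sᵐᵒᵖ D]
    [IsScalarTower k S D] [IsScalarTower k Sᵐᵒᵖ D]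
    [SMulCommClass S Sᵐᵒᵖ D]
    [DistribMulAction G D]
    (RC : ResKG k G C) (RD : ResS k G S D)
    -- the skew group algebra `A = S ⋊ G`
    (A : Type u) [Ring A] [Algebra k A] (ιS : S →ₐ[k] A) (ιG : G →* A)
    -- the `A`-bimodule structure on `X = C ⊗ D`
    [Module A (C ⊗[k] D)] [Module Aᵐᵒᵖ (C ⊗[k] D)]
    (hactL : ∀ (s' : S) (g' h : G) (c : C) (d : D), c ∈ RC.grG h →
      (ιS s' * ιG g') • (c ⊗ₜ[k] d) =
        ((MonoidAlgebra.single g' (1 : k)) • c) ⊗ₜ[k] ((((g' * h)⁻¹ : G) • s') • d))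
    (hactR : ∀ (s : S) (g : G) (c : C) (d : D),
      (op (ιS s * ιG g)) • (c ⊗ₜ[k] d) =
        (op (MonoidAlgebra.single g (1 : k)) • c) ⊗ₜ[k] ((g⁻¹ : G) • (op s • d)))
    -- the composition of `1 ⊗ τ ⊗ 1` with the canonical surjection
    -- `C ⊗ D ⊗ C ⊗ D → (C ⊗^G D) ⊗_{S ⋊ G} (C ⊗^G D)`, characterized by its values on
    -- pure tensors of homogeneous elements:
    (Ψ : (C ⊗[k] C) ⊗[k] (D ⊗[k] D) →ₗ[k] OverR k A (C ⊗[k] D) (C ⊗[k] D))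
    (hΨ : ∀ (i j : ℕ) (g : G) (c c' : C) (d d' : D),
      c' ∈ RC.gr i → c' ∈ RC.grG g → d ∈ RD.gr j →
      Ψ ((c ⊗ₜ[k] c') ⊗ₜ[k] (d ⊗ₜ[k] d')) =
        (-1 : k) ^ (i * j) • omk k A (c ⊗ₜ[k] (g • d)) (c' ⊗ₜ[k] d')) :
    -- `kG`-middle linearity in the first two arguments:
    (∀ (z : MonoidAlgebra k G) (c c' : C) (d d' : D),
      Ψ (((op z • c) ⊗ₜ[k] c') ⊗ₜ[k] (d ⊗ₜ[k] d')) =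
        Ψ ((c ⊗ₜ[k] (z • c')) ⊗ₜ[k] (d ⊗ₜ[k] d'))) ∧
    -- `S`-middle linearity in the last two arguments:
    (∀ (s : S) (c c' : C) (d d' : D),
      Ψ ((c ⊗ₜ[k] c') ⊗ₜ[k] ((op s • d) ⊗ₜ[k] d')) =
        Ψ ((c ⊗ₜ[k] c') ⊗ₜ[k] (d ⊗ₜ[k] (s • d')))) ∧
    -- hence the map factors through `(C ⊗_{kG} C) ⊗ (D ⊗_S D)`:
    (∃ Θ : (OverR k (MonoidAlgebra k G) C C) ⊗[k] (OverR k S D D) →ₗ[k]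
        OverR k A (C ⊗[k] D) (C ⊗[k] D),
      Ψ = Θ ∘ₗ TensorProduct.map (midRel k (MonoidAlgebra k G) C C).mkQ
        (midRel k S D D).mkQ) := by
  have hkG : ∀ (z : MonoidAlgebra k G) (c c' : C) (d d' : D),
      Ψ (((op z • c) ⊗ₜ[k] c') ⊗ₜ[k] (d ⊗ₜ[k] d')) =
        Ψ ((c ⊗ₜ[k] (z • c')) ⊗ₜ[k] (d ⊗ₜ[k] d')) := fun z c c' d d' =>
    MonoidAlgebra.op_smul_tmul_eq_of_single ((TensorProduct.curry Ψ).flip (d ⊗ₜ[k] d'))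
      (fun g c c' => LinearMap.congr_fun₂ (curryMiddle_op_single_smul hactL hactR hΨ g c d') c' d)
      z c c'
  have hS : ∀ (s : S) (c c' : C) (d d' : D),
      Ψ ((c ⊗ₜ[k] c') ⊗ₜ[k] ((op s • d) ⊗ₜ[k] d')) =
        Ψ ((c ⊗ₜ[k] c') ⊗ₜ[k] (d ⊗ₜ[k] (s • d'))) := fun s c c' d d' =>
    LinearMap.congr_fun₂ (curryMiddle_compl₂_op_smul hactL hactR hΨ s c d') c' d
  exact ⟨hkG, hS, exists_eq_comp_map_midRel_mkQ Ψ hkG hS⟩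

end
end

section
/- Suppose (C, Δ_C, μ_C) is a differential graded coalgebra resolution of kG with Δ_C and μ_C preserving the G-grading, and (D, Δ_D, μ_D) is a differential graded coalgebra resolution of S with Δ_D and μ_D being kG-module homomorphisms. Then the map Δ_X = (1 ⊗ τ ⊗ 1)(Δ_C ⊗ Δ_D) on X = C ⊗^G D is counital: (μ_X ⊗ 1_X)Δ_X = 1_X = (1_X ⊗ μ_X)Δ_X, where μ_X = μ_C ⊗ μ_D is the augmentation of X. -/
open scoped TensorProduct
open MulOpposite

noncomputable section

universe u

variable (k : Type u) [Field k]

variable (G : Type u) [Group G] [Finite G] [DecidableEq G]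
variable (S : Type u) [Ring S] [Algebra k S] [MulSemiringAction G S] [SMulCommClass G k S]

section Extra

variable (R : Type u) [Ring R]

/-- The middle-linearity relations for the triple tensor product `M ⊗_R M ⊗_R M`. -/
def midRel3 (M : Type u)
    [AddCommGroup M] [Module k M] [Module R M] [Module Rᵐᵒᵖ M] :
    Submodule k (M ⊗[k] (M ⊗[k] M)) :=
  Submodule.span k
    ({z | ∃ (r : R) (m n q : M),
        z = (op r • m) ⊗ₜ[k] (n ⊗ₜ[k] q) - m ⊗ₜ[k] ((r • n) ⊗ₜ[k] q)} ∪
     {z | ∃ (r : R) (m n q : M),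
        z = m ⊗ₜ[k] ((op r • n) ⊗ₜ[k] q) - m ⊗ₜ[k] (n ⊗ₜ[k] (r • q))})

/-- The triple tensor product `M ⊗_R M ⊗_R M` over `R`. -/
abbrev Over3 (M : Type u)
    [AddCommGroup M] [Module k M] [Module R M] [Module Rᵐᵒᵖ M] : Type u :=
  (M ⊗[k] (M ⊗[k] M)) ⧸ midRel3 k R M

/-- The image of a pure tensor in `M ⊗_R M ⊗_R M`. -/
abbrev omk3 {M : Type u}
    [AddCommGroup M] [Module k M] [Module R M] [Module Rᵐᵒᵖ M] (m n q : M) :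
    Over3 k R M :=
  Submodule.Quotient.mk (m ⊗ₜ[k] (n ⊗ₜ[k] q))

/-- The homogeneous component of total homological degree `n` of `M ⊗_R M` for an
internally graded `M`. -/
def TdegN (M : Type u)
    [AddCommGroup M] [Module k M] [Module R M] [Module Rᵐᵒᵖ M]
    (gr : ℕ → Submodule k M) (n : ℕ) : Submodule k (OverR k R M M) :=
  ⨆ (p : ℕ × ℕ) (_ : p.1 + p.2 = n),
    Submodule.span k
      (Set.image2 (fun x y : M => omk k R x y) (gr p.1 : Set M) (gr p.2 : Set M))

/-- The homogeneous component of `G`-degree `g` of `M ⊗_R M` for a `G`-graded `M`. -/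
def TdegG (M : Type u)
    [AddCommGroup M] [Module k M] [Module R M] [Module Rᵐᵒᵖ M]
    (grG : G → Submodule k M) (g : G) : Submodule k (OverR k R M M) :=
  ⨆ (p : G × G) (_ : p.1 * p.2 = g),
    Submodule.span k
      (Set.image2 (fun x y : M => omk k R x y) (grG p.1 : Set M) (grG p.2 : Set M))

end Extra

variable {G S}

/-
On a generator `(a ⊗ b) ⊗ (e ⊗ f)` of `(C ⊗_{kG} C) ⊗ (D ⊗_S D)` with `a` of `G`-degree `h`,
`b ∈ (C_i)_g` and `e ∈ D_j`, the twist gives `± (a ⊗ ᵍe) ⊗ (b ⊗ f)`. Writing `μ_C a = κ h`,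
`μ_X (a ⊗ ᵍe) = ιS (hg · μ_D e) · κ ιG h`, and its action on `b ⊗ f` untwists `hg · μ_D e` back
to `μ_D e`, so `μ_X ⊗ 1` yields `(μ_C a · b) ⊗ (μ_D e · f)`; the sign `(-1)^{ij}` is harmless
because `μ_D` vanishes on `D_j` for `j > 0`. Hence `(μ_X ⊗ 1) ∘ (1 ⊗ τ ⊗ 1)` is
`(μ_C ⊗ 1) ⊗ (μ_D ⊗ 1)`, and counitality of `Δ_X` follows from that of `Δ_C` and `Δ_D`. The
right counit is symmetric, the sign now being absorbed by `μ_C` vanishing on `C_i` for `i > 0`.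
-/

theorem TensorProduct.ext_of_iSup_eq_top {R M N P : Type*} [CommSemiring R]
    [AddCommMonoid M] [Module R M] [AddCommMonoid N] [Module R N]
    [AddCommMonoid P] [Module R P] {ι κ : Type*}
    {p : ι → Submodule R M} {q : κ → Submodule R N} (hp : iSup p = ⊤) (hq : iSup q = ⊤)
    {f g : M ⊗[R] N →ₗ[R] P}
    (h : ∀ i j, ∀ m ∈ p i, ∀ n ∈ q j, f (m ⊗ₜ n) = g (m ⊗ₜ n)) : f = g := by
  refine TensorProduct.ext <| LinearMap.ext_on (s := ⋃ i, (p i : Set M))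
    (by rw [← Submodule.iSup_eq_span, hp]) fun m hm => ?_
  refine LinearMap.ext_on (s := ⋃ j, (q j : Set N))
    (by rw [← Submodule.iSup_eq_span, hq]) fun n hn => ?_
  obtain ⟨i, hm⟩ := Set.mem_iUnion.1 hm
  obtain ⟨j, hn⟩ := Set.mem_iUnion.1 hn
  exact h i j m hm n hn

section OverR

variable {k}
variable {R M N : Type u} [Ring R] [AddCommGroup M] [Module k M] [Module Rᵐᵒᵖ M]
  [AddCommGroup N] [Module k N] [Module R N] {ι κ : Type*}
  {p : ι → Submodule k M} {q : κ → Submodule k N}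

theorem OverR.linearMap_ext {P : Type*} [AddCommGroup P] [Module k P]
    (hp : iSup p = ⊤) (hq : iSup q = ⊤) {f g : OverR k R M N →ₗ[k] P}
    (h : ∀ i j, ∀ m ∈ p i, ∀ n ∈ q j, f (omk k R m n) = g (omk k R m n)) : f = g :=
  Submodule.linearMap_qext _ (TensorProduct.ext_of_iSup_eq_top hp hq h)

theorem OverR.tensor_ext {R' M' N' : Type u} [Ring R'] [AddCommGroup M'] [Module k M']
    [Module R'ᵐᵒᵖ M'] [AddCommGroup N'] [Module k N'] [Module R' N']
    {P : Type*} [AddCommGroup P] [Module k P]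
    {ι' κ' : Type*} {p' : ι' → Submodule k M'} {q' : κ' → Submodule k N'}
    (hp : iSup p = ⊤) (hq : iSup q = ⊤) (hp' : iSup p' = ⊤) (hq' : iSup q' = ⊤)
    {f g : OverR k R M N ⊗[k] OverR k R' M' N' →ₗ[k] P}
    (h : ∀ i j i' j', ∀ m ∈ p i, ∀ n ∈ q j, ∀ m' ∈ p' i', ∀ n' ∈ q' j',
      f (omk k R m n ⊗ₜ omk k R' m' n') = g (omk k R m n ⊗ₜ omk k R' m' n')) : f = g :=
  TensorProduct.ext <| OverR.linearMap_ext hp hq fun i j m hm n hn =>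
    OverR.linearMap_ext hp' hq' fun i' j' m' hm' n' hn' => h i j i' j' m hm n hn m' hm' n' hn'

end OverR

section TwistedProduct

variable {k}
variable {C : Type u} [AddCommGroup C] [Module k C]
  [Module (MonoidAlgebra k G) C] [Module (MonoidAlgebra k G)ᵐᵒᵖ C]
  [IsScalarTower k (MonoidAlgebra k G) C] [IsScalarTower k (MonoidAlgebra k G)ᵐᵒᵖ C]
  [SMulCommClass (MonoidAlgebra k G) (MonoidAlgebra k G)ᵐᵒᵖ C]
  {D : Type u} [AddCommGroup D] [Module k D] [Module S D] [Module Sᵐᵒᵖ D]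
  [IsScalarTower k S D] [IsScalarTower k Sᵐᵒᵖ D] [SMulCommClass S Sᵐᵒᵖ D]
  [DistribMulAction G D]
  (RC : ResKG k G C) (RD : ResS k G S D)

omit [Finite G] in
theorem ResKG.neg_one_pow_smul_aug {i : ℕ} {x : C} (hx : x ∈ RC.gr i) (n : ℕ) :
    (-1 : k) ^ (i * n) • RC.aug x = RC.aug x := by
  cases i with
  | zero => rw [zero_mul, pow_zero, one_smul]
  | succ i => rw [RC.aug_gr i x hx, smul_zero]

omit [Finite G] [DecidableEq G] [SMulCommClass G k S] in
theorem ResS.neg_one_pow_smul_aug {j : ℕ} {x : D} (hx : x ∈ RD.gr j) (n : ℕ) :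
    (-1 : k) ^ (n * j) • RD.aug x = RD.aug x := by
  cases j with
  | zero => rw [mul_zero, pow_zero, one_smul]
  | succ j => rw [RD.aug_gr j x hx, smul_zero]

variable {A : Type u} [Ring A] [Algebra k A] (ιS : S →ₐ[k] A) (ιG : G →* A)
  {augX : C ⊗[k] D →ₗ[k] A}

section Left

variable [Module A (C ⊗[k] D)] [IsScalarTower k A (C ⊗[k] D)]

omit [Finite G] [SMulCommClass G k S] in
theorem augX_smul_tmul
    (hactL : ∀ (s' : S) (g' h : G) (c : C) (d : D), c ∈ RC.grG h →
      (ιS s' * ιG g') • (c ⊗ₜ[k] d) =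
        ((MonoidAlgebra.single g' (1 : k)) • c) ⊗ₜ[k] ((((g' * h)⁻¹ : G) • s') • d))
    (haugD_gact : ∀ (g : G) (x : D), RD.aug (g • x) = g • RD.aug x)
    (haugX : ∀ (g : G) (c : C) (d : D), c ∈ RC.grG g →
      augX (c ⊗ₜ[k] d) = ιS (g • RD.aug d) * (MonoidAlgebra.lift k A G ιG) (RC.aug c))
    {ga gb : G} {κ : k} {a b : C} (ha : a ∈ RC.grG ga)
    (ha_aug : RC.aug a = MonoidAlgebra.single ga κ) (hb : b ∈ RC.grG gb) (e f : D) :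
    augX (a ⊗ₜ[k] (gb • e)) • (b ⊗ₜ[k] f) = (RC.aug a • b) ⊗ₜ[k] (RD.aug e • f) := by
  rw [haugX ga a _ ha, haugD_gact, ha_aug, MonoidAlgebra.lift_single, mul_smul_comm,
    smul_assoc, hactL _ ga gb b f hb, smul_smul ga gb, inv_smul_smul,
    TensorProduct.smul_tmul', ← smul_assoc, MonoidAlgebra.smul_single', mul_one]

omit [Finite G] [SMulCommClass G k S] in
theorem lmuX_comp_Θ [Module Aᵐᵒᵖ (C ⊗[k] D)]
    {Θ : OverR k (MonoidAlgebra k G) C C ⊗[k] OverR k S D D →ₗ[k]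
      OverR k A (C ⊗[k] D) (C ⊗[k] D)}
    (hactL : ∀ (s' : S) (g' h : G) (c : C) (d : D), c ∈ RC.grG h →
      (ιS s' * ιG g') • (c ⊗ₜ[k] d) =
        ((MonoidAlgebra.single g' (1 : k)) • c) ⊗ₜ[k] ((((g' * h)⁻¹ : G) • s') • d))
    (haugC_grG : ∀ (g : G) (x : C), x ∈ RC.grG g →
      ∃ κ : k, RC.aug x = MonoidAlgebra.single g κ)
    (haugD_gact : ∀ (g : G) (x : D), RD.aug (g • x) = g • RD.aug x)
    (hΘ : ∀ (i j : ℕ) (g : G) (c c' : C) (d d' : D),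
      c' ∈ RC.gr i → c' ∈ RC.grG g → d ∈ RD.gr j →
      Θ ((omk k (MonoidAlgebra k G) c c') ⊗ₜ[k] (omk k S d d')) =
        (-1 : k) ^ (i * j) • omk k A (c ⊗ₜ[k] (g • d)) (c' ⊗ₜ[k] d'))
    (haugX : ∀ (g : G) (c : C) (d : D), c ∈ RC.grG g →
      augX (c ⊗ₜ[k] d) = ιS (g • RD.aug d) * (MonoidAlgebra.lift k A G ιG) (RC.aug c))
    {lmuX : OverR k A (C ⊗[k] D) (C ⊗[k] D) →ₗ[k] C ⊗[k] D}
    (hlmuX : ∀ x y : C ⊗[k] D, lmuX (omk k A x y) = augX x • y)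
    {lmuC : OverR k (MonoidAlgebra k G) C C →ₗ[k] C}
    (hlmuC : ∀ c c' : C, lmuC (omk k (MonoidAlgebra k G) c c') = RC.aug c • c')
    {lmuD : OverR k S D D →ₗ[k] D}
    (hlmuD : ∀ d d' : D, lmuD (omk k S d d') = RD.aug d • d') :
    lmuX ∘ₗ Θ = TensorProduct.map lmuC lmuD := by
  have hC := RC.internal.submodule_iSup_eq_top
  have hD := RD.internal.submodule_iSup_eq_top
  refine OverR.tensor_ext hC hC hD hD fun ⟨_, ga⟩ ⟨i, gb⟩ j _ a ha b hb e he f _ => ?_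
  obtain ⟨κ, hκ⟩ := haugC_grG ga a ha.2
  rw [LinearMap.comp_apply, hΘ i j gb a b e f hb.1 hb.2 he, map_smul, hlmuX,
    augX_smul_tmul RC RD ιS ιG hactL haugD_gact haugX ha.2 hκ hb.2, TensorProduct.map_tmul,
    hlmuC, hlmuD, ← TensorProduct.tmul_smul, ← smul_assoc, RD.neg_one_pow_smul_aug he]

end Left

section Right

variable [Module Aᵐᵒᵖ (C ⊗[k] D)] [IsScalarTower k Aᵐᵒᵖ (C ⊗[k] D)]

omit [Finite G] [SMulCommClass G k S] in
theorem op_augX_smul_tmul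
    (hactR : ∀ (s : S) (g : G) (c : C) (d : D),
      (op (ιS s * ιG g)) • (c ⊗ₜ[k] d) =
        (op (MonoidAlgebra.single g (1 : k)) • c) ⊗ₜ[k] ((g⁻¹ : G) • (op s • d)))
    (haugX : ∀ (g : G) (c : C) (d : D), c ∈ RC.grG g →
      augX (c ⊗ₜ[k] d) = ιS (g • RD.aug d) * (MonoidAlgebra.lift k A G ιG) (RC.aug c))
    {gb : G} {κ : k} {b : C} (hb : b ∈ RC.grG gb)
    (hb_aug : RC.aug b = MonoidAlgebra.single gb κ) (a : C) (e f : D) :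
    op (augX (b ⊗ₜ[k] f)) • (a ⊗ₜ[k] (gb • e)) =
      (op (RC.aug b) • a) ⊗ₜ[k] (op (RD.aug f) • e) := by
  rw [haugX gb b f hb, hb_aug, MonoidAlgebra.lift_single, mul_smul_comm, op_smul, smul_assoc,
    hactR, ← RD.act_compat_op, inv_smul_smul, TensorProduct.smul_tmul', ← smul_assoc,
    ← op_smul, MonoidAlgebra.smul_single', mul_one]

omit [Finite G] [SMulCommClass G k S] in
theorem rmuX_comp_Θ [Module A (C ⊗[k] D)]
    {Θ : OverR k (MonoidAlgebra k G) C C ⊗[k] OverR k S D D →ₗ[k]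
      OverR k A (C ⊗[k] D) (C ⊗[k] D)}
    (hactR : ∀ (s : S) (g : G) (c : C) (d : D),
      (op (ιS s * ιG g)) • (c ⊗ₜ[k] d) =
        (op (MonoidAlgebra.single g (1 : k)) • c) ⊗ₜ[k] ((g⁻¹ : G) • (op s • d)))
    (haugC_grG : ∀ (g : G) (x : C), x ∈ RC.grG g →
      ∃ κ : k, RC.aug x = MonoidAlgebra.single g κ)
    (hΘ : ∀ (i j : ℕ) (g : G) (c c' : C) (d d' : D),
      c' ∈ RC.gr i → c' ∈ RC.grG g → d ∈ RD.gr j →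
      Θ ((omk k (MonoidAlgebra k G) c c') ⊗ₜ[k] (omk k S d d')) =
        (-1 : k) ^ (i * j) • omk k A (c ⊗ₜ[k] (g • d)) (c' ⊗ₜ[k] d'))
    (haugX : ∀ (g : G) (c : C) (d : D), c ∈ RC.grG g →
      augX (c ⊗ₜ[k] d) = ιS (g • RD.aug d) * (MonoidAlgebra.lift k A G ιG) (RC.aug c))
    {rmuX : OverR k A (C ⊗[k] D) (C ⊗[k] D) →ₗ[k] C ⊗[k] D}
    (hrmuX : ∀ x y : C ⊗[k] D, rmuX (omk k A x y) = op (augX y) • x)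
    {rmuC : OverR k (MonoidAlgebra k G) C C →ₗ[k] C}
    (hrmuC : ∀ c c' : C, rmuC (omk k (MonoidAlgebra k G) c c') = op (RC.aug c') • c)
    {rmuD : OverR k S D D →ₗ[k] D}
    (hrmuD : ∀ d d' : D, rmuD (omk k S d d') = op (RD.aug d') • d) :
    rmuX ∘ₗ Θ = TensorProduct.map rmuC rmuD := by
  have hC := RC.internal.submodule_iSup_eq_top
  have hD := RD.internal.submodule_iSup_eq_top
  refine OverR.tensor_ext hC hC hD hD fun _ ⟨i, gb⟩ j _ a _ b hb e he f _ => ?_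
  obtain ⟨κ, hκ⟩ := haugC_grG gb b hb.2
  rw [LinearMap.comp_apply, hΘ i j gb a b e f hb.1 hb.2 he, map_smul, hrmuX,
    op_augX_smul_tmul RC RD ιS ιG hactR haugX hb.2 hκ, TensorProduct.map_tmul,
    hrmuC, hrmuD, TensorProduct.smul_tmul', ← smul_assoc, ← op_smul,
    RC.neg_one_pow_smul_aug hb.1]

end Right

end TwistedProduct

theorem twisted_product_diagonal_counital
    (C : Type u) [AddCommGroup C] [Module k C]
    [Module (MonoidAlgebra k G) C] [Module (MonoidAlgebra k G)ᵐᵒᵖ C]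
    [IsScalarTower k (MonoidAlgebra k G) C] [IsScalarTower k (MonoidAlgebra k G)ᵐᵒᵖ C]
    [SMulCommClass (MonoidAlgebra k G) (MonoidAlgebra k G)ᵐᵒᵖ C]
    (D : Type u) [AddCommGroup D] [Module k D]
    [Module S D] [Module Sᵐᵒᵖ D]
    [IsScalarTower k S D] [IsScalarTower k Sᵐᵒᵖ D]
    [SMulCommClass S Sᵐᵒᵖ D]
    [DistribMulAction G D]
    (RC : ResKG k G C) (RD : ResS k G S D)
    -- the skew group algebra `A = S ⋊ G`
    (A : Type u) [Ring A] [Algebra k A] (ιS : S →ₐ[k] A) (ιG : G →* A)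
    -- the `A`-bimodule structure on `X = C ⊗ D`
    [Module A (C ⊗[k] D)] [Module Aᵐᵒᵖ (C ⊗[k] D)]
    [IsScalarTower k A (C ⊗[k] D)] [IsScalarTower k Aᵐᵒᵖ (C ⊗[k] D)]
    (hactL : ∀ (s' : S) (g' h : G) (c : C) (d : D), c ∈ RC.grG h →
      (ιS s' * ιG g') • (c ⊗ₜ[k] d) =
        ((MonoidAlgebra.single g' (1 : k)) • c) ⊗ₜ[k] ((((g' * h)⁻¹ : G) • s') • d))
    (hactR : ∀ (s : S) (g : G) (c : C) (d : D),
      (op (ιS s * ιG g)) • (c ⊗ₜ[k] d) =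
        (op (MonoidAlgebra.single g (1 : k)) • c) ⊗ₜ[k] ((g⁻¹ : G) • (op s • d)))
    -- the differential graded coalgebra structure on `C`: counit maps, diagonal,
    -- bimodule actions on `C ⊗_{kG} C`, and coassociativity data
    (lmuC : OverR k (MonoidAlgebra k G) C C →ₗ[k] C)
    (hlmuC : ∀ c c' : C, lmuC (omk k (MonoidAlgebra k G) c c') = RC.aug c • c')
    (rmuC : OverR k (MonoidAlgebra k G) C C →ₗ[k] C)
    (hrmuC : ∀ c c' : C, rmuC (omk k (MonoidAlgebra k G) c c') = op (RC.aug c') • c)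
    (ΔC : C →ₗ[k] OverR k (MonoidAlgebra k G) C C)
    (hΔC_counit_l : lmuC ∘ₗ ΔC = LinearMap.id)
    (hΔC_counit_r : rmuC ∘ₗ ΔC = LinearMap.id)
    -- `μ_C` preserves the `G`-grading
    (haugC_grG : ∀ (g : G) (x : C), x ∈ RC.grG g →
      ∃ κ : k, RC.aug x = MonoidAlgebra.single g κ)
    -- the differential graded coalgebra structure on `D`
    (lmuD : OverR k S D D →ₗ[k] D)
    (hlmuD : ∀ d d' : D, lmuD (omk k S d d') = RD.aug d • d')
    (rmuD : OverR k S D D →ₗ[k] D)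
    (hrmuD : ∀ d d' : D, rmuD (omk k S d d') = op (RD.aug d') • d)
    (ΔD : D →ₗ[k] OverR k S D D)
    (hΔD_counit_l : lmuD ∘ₗ ΔD = LinearMap.id)
    (hΔD_counit_r : rmuD ∘ₗ ΔD = LinearMap.id)
    -- `μ_D` is a `kG`-module homomorphism
    (haugD_gact : ∀ (g : G) (x : D), RD.aug (g • x) = g • RD.aug x)
    -- the chain map `1 ⊗ τ ⊗ 1 : (C ⊗_{kG} C) ⊗ (D ⊗_S D) → X ⊗_A X` induced by the
    -- twisting map `τ(c ⊗ d) = (−1)^{ij} (ᵍd) ⊗ c` for `c ∈ (C_i)_g`, `d ∈ D_j`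
    (Θ : (OverR k (MonoidAlgebra k G) C C) ⊗[k] (OverR k S D D) →ₗ[k]
      OverR k A (C ⊗[k] D) (C ⊗[k] D))
    (hΘ : ∀ (i j : ℕ) (g : G) (c c' : C) (d d' : D),
      c' ∈ RC.gr i → c' ∈ RC.grG g → d ∈ RD.gr j →
      Θ ((omk k (MonoidAlgebra k G) c c') ⊗ₜ[k] (omk k S d d')) =
        (-1 : k) ^ (i * j) • omk k A (c ⊗ₜ[k] (g • d)) (c' ⊗ₜ[k] d'))
    -- the augmentation `μ_X = μ_C ⊗ μ_D : X → A` (under the canonical identification of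
    -- `X₀ = C₀ ⊗ D₀` with `A` coming from the bimodule structure) and the counit maps
    -- `μ_X ⊗ 1` and `1 ⊗ μ_X` on `X ⊗_A X`
    (augX : C ⊗[k] D →ₗ[k] A)
    (haugX : ∀ (g : G) (c : C) (d : D), c ∈ RC.grG g →
      augX (c ⊗ₜ[k] d) =
        ιS (g • RD.aug d) * (MonoidAlgebra.lift k A G ιG) (RC.aug c))
    (lmuX : OverR k A (C ⊗[k] D) (C ⊗[k] D) →ₗ[k] C ⊗[k] D)
    (hlmuX : ∀ x y : C ⊗[k] D, lmuX (omk k A x y) = augX x • y)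
    (rmuX : OverR k A (C ⊗[k] D) (C ⊗[k] D) →ₗ[k] C ⊗[k] D)
    (hrmuX : ∀ x y : C ⊗[k] D, rmuX (omk k A x y) = op (augX y) • x) :
    lmuX ∘ₗ (Θ ∘ₗ TensorProduct.map ΔC ΔD) = LinearMap.id ∧
    rmuX ∘ₗ (Θ ∘ₗ TensorProduct.map ΔC ΔD) = LinearMap.id := by
  refine ⟨?_, ?_⟩
  · rw [← LinearMap.comp_assoc,
      lmuX_comp_Θ RC RD ιS ιG hactL haugC_grG haugD_gact hΘ haugX hlmuX hlmuC hlmuD,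
      ← TensorProduct.map_comp, hΔC_counit_l, hΔD_counit_l, TensorProduct.map_id]
  · rw [← LinearMap.comp_assoc,
      rmuX_comp_Θ RC RD ιS ιG hactR haugC_grG hΘ haugX hrmuX hrmuC hrmuD,
      ← TensorProduct.map_comp, hΔC_counit_r, hΔD_counit_r, TensorProduct.map_id]

end
end
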